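/- arXiv:2408.11159 — 2 statements merged into one kernel-verified Lean document; each statement's English description precedes it below -/
import Mathlib

section
/- There exists an absolute constant C' ≥ 1 such that the following holds. Let t ≥ 0, b > 0, 0 < δ ≤ b/2, and let w, w' ∈ ℝ³ satisfy b ≤ ‖w − w'‖ ≤ 2b. If r, r' ∈ [1/2, 1] are such that ‖π_{t,r}(w) − π_{t,r}(w')‖ ≤ δ and ‖π_{t,r'}(w) − π_{t,r'}(w')‖ ≤ δ, then |r − r'| ≤ C'·δ/b. -/
open MeasureTheory Real Metric

noncomputable section

abbrev E3 := EuclideanSpace ℝ (Fin 3)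
abbrev E2 := EuclideanSpace ℝ (Fin 2)

/-- The projection `π_{t,r} : ℝ³ → ℝ²`. -/
def piProj (t r : ℝ) (w : E3) : E2 :=
  (EuclideanSpace.equiv (Fin 2) ℝ).symm
    ![Real.exp t * (w 0 + r * w 1 + r ^ 2 / 2 * w 2), w 1 + r * w 2]

lemma normsq2' (x : E2) : ‖x‖^2 = (x 0)^2 + (x 1)^2 := by
  rw [EuclideanSpace.norm_eq, Real.sq_sqrt (by positivity)]
  simp [Fin.sum_univ_two, sq_abs]

lemma normsq3' (x : E3) : ‖x‖^2 = (x 0)^2 + (x 1)^2 + (x 2)^2 := by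
  rw [EuclideanSpace.norm_eq, Real.sq_sqrt (by positivity)]
  simp [Fin.sum_univ_three, sq_abs]

lemma abs_coord2' (x : E2) (i : Fin 2) : |x i| ≤ ‖x‖ := by
  have h := normsq2' x
  have h0 := norm_nonneg x
  fin_cases i
  · show |x 0| ≤ ‖x‖
    nlinarith [sq_abs (x 0), abs_nonneg (x 0), sq_nonneg (x 1)]
  · show |x 1| ≤ ‖x‖
    nlinarith [sq_abs (x 1), abs_nonneg (x 1), sq_nonneg (x 0)]

lemma norm3_le' (x : E3) : ‖x‖ ≤ |x 0| + |x 1| + |x 2| := by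
  have h := normsq3' x
  have h0 := norm_nonneg x
  nlinarith [sq_abs (x 0), sq_abs (x 1), sq_abs (x 2), abs_nonneg (x 0), abs_nonneg (x 1),
    abs_nonneg (x 2), mul_nonneg (abs_nonneg (x 0)) (abs_nonneg (x 1)),
    mul_nonneg (abs_nonneg (x 0)) (abs_nonneg (x 2)),
    mul_nonneg (abs_nonneg (x 1)) (abs_nonneg (x 2))]

/-- Componentwise bounds from the projection bound. -/
lemma piProj_comp_bounds (t r δ : ℝ) (w w' : E3) (ht : 0 ≤ t)
    (h : ‖piProj t r w - piProj t r w'‖ ≤ δ) :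
    |(w 0 - w' 0) + r * (w 1 - w' 1) + r ^ 2 / 2 * (w 2 - w' 2)| ≤ δ ∧
    |(w 1 - w' 1) + r * (w 2 - w' 2)| ≤ δ := by
  have e0 : (piProj t r w - piProj t r w') 0
      = Real.exp t * ((w 0 - w' 0) + r * (w 1 - w' 1) + r ^ 2 / 2 * (w 2 - w' 2)) := by
    simp [piProj]; ring
  have e1 : (piProj t r w - piProj t r w') 1
      = (w 1 - w' 1) + r * (w 2 - w' 2) := by
    simp [piProj]; ring
  have h0 := (abs_coord2' (piProj t r w - piProj t r w') 0).trans h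
  have h1 := (abs_coord2' (piProj t r w - piProj t r w') 1).trans h
  rw [e0] at h0
  rw [e1] at h1
  refine ⟨?_, h1⟩
  have hexp : 1 ≤ Real.exp t := Real.one_le_exp ht
  rw [abs_mul, abs_of_pos (Real.exp_pos t)] at h0
  nlinarith [abs_nonneg ((w 0 - w' 0) + r * (w 1 - w' 1) + r ^ 2 / 2 * (w 2 - w' 2))]

lemma arith_case1 (b δ x y : ℝ) (hb : 0 < b) (hδ : 0 < δ) (hx : 0 ≤ x)
    (h1 : x * y ≤ 2 * δ) (h2 : 5 * b / 28 ≤ y) : x * b ≤ 12 * δ := by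
  nlinarith

set_option maxHeartbeats 1000000 in
theorem stmt6 :
    ∃ C' : ℝ, 1 ≤ C' ∧
      ∀ (t b δ : ℝ) (w w' : E3) (r r' : ℝ),
        0 ≤ t → 0 < b → 0 < δ → δ ≤ b / 2 →
        b ≤ ‖w - w'‖ → ‖w - w'‖ ≤ 2 * b →
        r ∈ Set.Icc (1/2 : ℝ) 1 → r' ∈ Set.Icc (1/2 : ℝ) 1 →
        ‖piProj t r w - piProj t r w'‖ ≤ δ →
        ‖piProj t r' w - piProj t r' w'‖ ≤ δ →
        |r - r'| ≤ C' * δ / b := by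
  refine ⟨12, by norm_num, ?_⟩
  intro t b δ w w' r r' ht hb hδ hδb hbn _ hr hr' hp hp'
  obtain ⟨hr1, hr2⟩ := hr
  obtain ⟨hr1', hr2'⟩ := hr'
  set A0 := w 0 - w' 0 with hA0
  set A1 := w 1 - w' 1 with hA1
  set A2 := w 2 - w' 2 with hA2
  obtain ⟨hu0, hu1⟩ := piProj_comp_bounds t r δ w w' ht hp
  obtain ⟨hu0', hu1'⟩ := piProj_comp_bounds t r' δ w w' ht hp'
  -- key bound : |(r - r') * A2| ≤ 2δ
  have hkey : |(r - r') * A2| ≤ 2 * δ := by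
    have : (r - r') * A2 = (A1 + r * A2) - (A1 + r' * A2) := by ring
    rw [this]
    calc |(A1 + r * A2) - (A1 + r' * A2)| ≤ |A1 + r * A2| + |A1 + r' * A2| := abs_sub _ _
    _ ≤ 2 * δ := by linarith
  -- b ≤ |A0| + |A1| + |A2|
  have hsum : b ≤ |A0| + |A1| + |A2| := by
    refine hbn.trans (le_trans (norm3_le' (w - w')) ?_)
    have s0 : (w - w') 0 = A0 := rfl
    have s1 : (w - w') 1 = A1 := rfl
    have s2 : (w - w') 2 = A2 := rfl
    rw [s0, s1, s2]
  -- |A1| ≤ δ + |A2|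
  have hA1b : |A1| ≤ δ + |A2| := by
    have : A1 = (A1 + r * A2) - r * A2 := by ring
    rw [this]
    calc |(A1 + r * A2) - r * A2| ≤ |A1 + r * A2| + |r * A2| := abs_sub _ _
    _ ≤ δ + |A2| := by
        rw [abs_mul]
        have : |r| ≤ 1 := abs_le.mpr ⟨by linarith, hr2⟩
        nlinarith [abs_nonneg A2]
  -- |A0| ≤ δ + |A1| + |A2|/2
  have hA0b : |A0| ≤ δ + |A1| + |A2| / 2 := by
    have : A0 = (A0 + r * A1 + r ^ 2 / 2 * A2) - r * A1 - r ^ 2 / 2 * A2 := by ring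
    rw [this]
    calc |(A0 + r * A1 + r ^ 2 / 2 * A2) - r * A1 - r ^ 2 / 2 * A2|
        ≤ |(A0 + r * A1 + r ^ 2 / 2 * A2) - r * A1| + |r ^ 2 / 2 * A2| := abs_sub _ _
      _ ≤ (|A0 + r * A1 + r ^ 2 / 2 * A2| + |r * A1|) + |r ^ 2 / 2 * A2| := by
          linarith [abs_sub (A0 + r * A1 + r ^ 2 / 2 * A2) (r * A1)]
      _ ≤ δ + |A1| + |A2| / 2 := by
          rw [abs_mul, abs_mul]
          have h1 : |r| ≤ 1 := abs_le.mpr ⟨by linarith, hr2⟩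
          have h2 : |r ^ 2 / 2| ≤ 1 / 2 := by
            rw [abs_div]
            have : |r ^ 2| ≤ 1 := by rw [abs_pow]; nlinarith [abs_nonneg r]
            rw [abs_of_pos (by norm_num : (0:ℝ) < 2)]
            linarith
          nlinarith [abs_nonneg A1, abs_nonneg A2]
  rw [le_div_iff₀ hb]
  by_cases hcase : δ ≤ b / 8
  · -- |A2| ≥ 5b/28
    have hA2b : 5 * b / 28 ≤ |A2| := by linarith
    rw [abs_mul] at hkey
    exact arith_case1 b δ _ _ hb hδ (abs_nonneg _) hkey hA2b
  · push_neg at hcase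
    have : |r - r'| ≤ 1 / 2 := abs_sub_le_iff.mpr ⟨by linarith, by linarith⟩
    nlinarith
end
end

section
/- There exist absolute constants c > 0 and C₁ ≥ 1 such that the following holds. Let F ⊂ ℝ³ be a finite nonempty set with uniform measure μ, let t ≥ 0, b > 0, 0 < δ ≤ b/2, w ∈ ℝ³, A > 0, and let I ⊂ [1/2, 1] be a measurable set with |I| ≥ C₁·δ/b. If for every r ∈ I one has μ({w' ∈ F ∩ D_b(w) : ‖π_{t,r}(w) − π_{t,r}(w')‖ ≤ δ}) ≥ A, then μ({w' ∈ F ∩ D_b(w) : ∃ r ∈ I with ‖π_{t,r}(w) − π_{t,r}(w')‖ ≤ δ}) ≥ c·(|I|·b/δ)·A. -/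
open MeasureTheory Real Metric

noncomputable section

/-- The uniform (normalized counting) measure of a set `A` with respect to a finite set `F`. -/
def mass {V : Type*} (F : Finset V) (A : Set V) : ℝ :=
  (Nat.card ↥(A ∩ (F : Set V)) : ℝ) / F.card

/-- The annulus `D_b(w) = {w' : b ≤ ‖w − w'‖ ≤ 2b}`. -/
def annulus (w : E3) (b : ℝ) : Set E3 := {w' | b ≤ ‖w - w'‖ ∧ ‖w - w'‖ ≤ 2 * b}

open ENNReal
lemma comp_le_norm {n : ℕ} (v : EuclideanSpace ℝ (Fin n)) (i : Fin n) : |v i| ≤ ‖v‖ := by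
  rw [EuclideanSpace.norm_eq, ← Real.sqrt_sq_eq_abs]
  apply Real.sqrt_le_sqrt
  have h := Finset.single_le_sum (f := fun j => ‖v j‖ ^ 2)
    (fun j _ => sq_nonneg _) (Finset.mem_univ i)
  simpa [Real.norm_eq_abs, sq_abs] using h

lemma max_ge_of_norm_ge (u : E3) (b : ℝ) (hb : 0 < b)
    (h : b ≤ ‖u‖) : b / 2 ≤ max |u 0| (max |u 1| |u 2|) := by
  by_contra hc
  push_neg at hc
  have h0 : |u 0| < b / 2 := lt_of_le_of_lt (le_max_left _ _) hc
  have h1 : |u 1| < b / 2 := lt_of_le_of_lt (le_trans (le_max_left _ _) (le_max_right _ _)) hc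
  have h2 : |u 2| < b / 2 := lt_of_le_of_lt (le_trans (le_max_right _ _) (le_max_right _ _)) hc
  have hn : ‖u‖ ^ 2 = |u 0| ^ 2 + |u 1| ^ 2 + |u 2| ^ 2 := by
    rw [EuclideanSpace.norm_eq, Real.sq_sqrt (by positivity)]
    simp [Fin.sum_univ_three, Real.norm_eq_abs]
  nlinarith [sq_nonneg (‖u‖ - b), abs_nonneg (u 0), abs_nonneg (u 1), abs_nonneg (u 2)]

lemma badset_bound (b δ u0 u1 u2 : ℝ) (hb : 0 < b) (hδ : 0 < δ)
    (hmax : b / 2 ≤ max |u0| (max |u1| |u2|)) :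
    volume {r : ℝ | r ∈ Set.Icc (1/2 : ℝ) 1 ∧
      |u0 + r * u1 + r ^ 2 / 2 * u2| ≤ δ ∧ |u1 + r * u2| ≤ δ} ≤
      ENNReal.ofReal (100 * δ / b) := by
  by_cases hbig : b ≤ 100 * δ
  · calc volume _ ≤ volume (Set.Icc (1/2 : ℝ) 1) :=
          measure_mono (fun r hr => hr.1)
      _ = ENNReal.ofReal (1/2) := by rw [Real.volume_Icc]; norm_num
      _ ≤ ENNReal.ofReal (100 * δ / b) := by
          apply ENNReal.ofReal_le_ofReal
          rw [le_div_iff₀ hb]; nlinarith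
  push_neg at hbig
  by_cases h2 : b / 16 ≤ |u2|
  · have hu2 : u2 ≠ 0 := by
      intro h; rw [h, abs_zero] at h2; linarith
    have habs : 0 < |u2| := abs_pos.mpr hu2
    calc volume _ ≤ volume (Set.Icc (-u1/u2 - δ/|u2|) (-u1/u2 + δ/|u2|)) := by
          apply measure_mono
          rintro r ⟨_, _, hr2⟩
          have heq : (r - (-u1/u2)) * u2 = u1 + r * u2 := by field_simp; ring
          have key : |r - (-u1/u2)| ≤ δ / |u2| := by
            rw [le_div_iff₀ habs, ← abs_mul, heq]; exact hr2
          rw [abs_sub_le_iff] at key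
          constructor <;> [linarith [key.2]; linarith [key.1]]
      _ ≤ ENNReal.ofReal (100 * δ / b) := by
          rw [Real.volume_Icc]
          apply ENNReal.ofReal_le_ofReal
          have he : -u1/u2 + δ/|u2| - (-u1/u2 - δ/|u2|) = (2*δ)/|u2| := by ring
          rw [he, div_le_div_iff₀ habs hb]
          nlinarith
  · push_neg at h2
    by_cases h1 : b / 8 ≤ |u1|
    · have hempty : {r : ℝ | r ∈ Set.Icc (1/2 : ℝ) 1 ∧
          |u0 + r * u1 + r ^ 2 / 2 * u2| ≤ δ ∧ |u1 + r * u2| ≤ δ} = ∅ := by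
        rw [Set.eq_empty_iff_forall_notMem]
        rintro r ⟨⟨hr1, hr2⟩, _, hc⟩
        have ha : |u1| ≤ |u1 + r*u2| + |r| * |u2| := by
          calc |u1| = |(u1 + r*u2) + (-(r*u2))| := by ring_nf
            _ ≤ |u1 + r*u2| + |(-(r*u2))| := abs_add_le _ _
            _ = |u1 + r*u2| + |r| * |u2| := by rw [abs_neg, abs_mul]
        have hrabs : |r| ≤ 1 := by rw [abs_le]; constructor <;> linarith
        nlinarith [abs_nonneg r]
      rw [hempty]
      simp
    · push_neg at h1
      have h0 : b / 2 ≤ |u0| := by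
        rcases max_cases |u0| (max |u1| |u2|) with ⟨he, _⟩ | ⟨he, _⟩
        · rw [he] at hmax; exact hmax
        · rw [he] at hmax
          rcases max_cases |u1| |u2| with ⟨he2, _⟩ | ⟨he2, _⟩ <;> rw [he2] at hmax <;> linarith
      have hempty : {r : ℝ | r ∈ Set.Icc (1/2 : ℝ) 1 ∧
          |u0 + r * u1 + r ^ 2 / 2 * u2| ≤ δ ∧ |u1 + r * u2| ≤ δ} = ∅ := by
        rw [Set.eq_empty_iff_forall_notMem]
        rintro r ⟨⟨hr1, hr2⟩, hc, _⟩
        have ha : |u0| ≤ |u0 + r*u1 + r^2/2*u2| + |r| * |u1| + |r|^2/2 * |u2| := by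
          calc |u0| = |(u0 + r*u1 + r^2/2*u2) + (-(r*u1)) + (-(r^2/2*u2))| := by ring_nf
            _ ≤ |(u0 + r*u1 + r^2/2*u2) + (-(r*u1))| + |(-(r^2/2*u2))| := abs_add_le _ _
            _ ≤ |u0 + r*u1 + r^2/2*u2| + |(-(r*u1))| + |(-(r^2/2*u2))| := by
                linarith [abs_add_le (u0 + r*u1 + r^2/2*u2) (-(r*u1))]
            _ = |u0 + r*u1 + r^2/2*u2| + |r| * |u1| + |r|^2/2 * |u2| := by
                rw [abs_neg, abs_neg, abs_mul]
                congr 1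
                rw [abs_mul]
                have : |r^2/2| = |r|^2/2 := by rw [abs_div, abs_pow]; norm_num
                rw [this]
        have hrabs : |r| ≤ 1 := by rw [abs_le]; constructor <;> linarith
        have hsq : |r|^2 ≤ 1 := by nlinarith [abs_nonneg r]
        have hm1 : |r| * |u1| ≤ |u1| := mul_le_of_le_one_left (abs_nonneg u1) hrabs
        have hm2 : |r|^2 * |u2| ≤ |u2| := mul_le_of_le_one_left (abs_nonneg u2) hsq
        linarith
      rw [hempty]
      simp

lemma close_imp (t r δ : ℝ) (ht : 0 ≤ t) (w w' : E3)
    (h : ‖piProj t r w - piProj t r w'‖ ≤ δ) :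
    |(w 0 - w' 0) + r * (w 1 - w' 1) + r ^ 2 / 2 * (w 2 - w' 2)| ≤ δ ∧
      |(w 1 - w' 1) + r * (w 2 - w' 2)| ≤ δ := by
  have h0 : |(piProj t r w - piProj t r w') 0| ≤ δ := (comp_le_norm _ 0).trans h
  have h1 : |(piProj t r w - piProj t r w') 1| ≤ δ := (comp_le_norm _ 1).trans h
  have e0 : (piProj t r w - piProj t r w') 0 =
      Real.exp t * ((w 0 - w' 0) + r * (w 1 - w' 1) + r ^ 2 / 2 * (w 2 - w' 2)) := by
    simp [piProj]; ring
  have e1 : (piProj t r w - piProj t r w') 1 =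
      (w 1 - w' 1) + r * (w 2 - w' 2) := by
    simp [piProj]; ring
  rw [e0, abs_mul, abs_of_pos (Real.exp_pos t)] at h0
  rw [e1] at h1
  have hexp : 1 ≤ Real.exp t := Real.one_le_exp ht
  refine ⟨?_, h1⟩
  nlinarith [abs_nonneg ((w 0 - w' 0) + r * (w 1 - w' 1) + r ^ 2 / 2 * (w 2 - w' 2))]

lemma piProj_cont (t : ℝ) (w : E3) : Continuous fun r => piProj t r w := by
  unfold piProj
  apply Continuous.comp (EuclideanSpace.equiv (Fin 2) ℝ).symm.continuous
  apply continuous_pi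
  intro i
  fin_cases i <;> simp <;> fun_prop

lemma mass_eq (F : Finset E3) (T : Set E3) [DecidablePred (· ∈ T)] :
    mass F T = (F.filter (· ∈ T)).card / F.card := by
  unfold mass
  congr 2
  rw [Nat.card_coe_set_eq]
  have h : T ∩ ↑F = ↑(F.filter (· ∈ T)) := by
    ext x; simp [and_comm]
  rw [h, Set.ncard_coe_finset]

theorem stmt7 :
    ∃ c C₁ : ℝ, 0 < c ∧ 1 ≤ C₁ ∧
      ∀ (F : Finset E3) (t b δ A : ℝ) (w : E3) (I : Set ℝ),
        F.Nonempty → 0 ≤ t → 0 < b → 0 < δ → δ ≤ b / 2 → 0 < A →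
        MeasurableSet I → I ⊆ Set.Icc (1/2 : ℝ) 1 →
        ENNReal.ofReal (C₁ * δ / b) ≤ volume I →
        (∀ r ∈ I, A ≤ mass F {w' | w' ∈ annulus w b ∧ ‖piProj t r w - piProj t r w'‖ ≤ δ}) →
        c * ((volume I).toReal * b / δ) * A ≤
          mass F {w' | w' ∈ annulus w b ∧ ∃ r ∈ I, ‖piProj t r w - piProj t r w'‖ ≤ δ} := by
  classical
  refine ⟨1/100, 1, by norm_num, le_refl 1, ?_⟩
  intro F t b δ A w I hF ht hb hδ hδb hA hI hIsub hIvol hmass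
  set S : Set E3 := {w' | w' ∈ annulus w b ∧ ∃ r ∈ I, ‖piProj t r w - piProj t r w'‖ ≤ δ} with hS
  set K := F.filter (· ∈ S) with hK
  have hN : (0:ℝ) < F.card := by exact_mod_cast Finset.card_pos.mpr hF
  -- the per-point r-sets
  set W : E3 → Set ℝ :=
    fun w' => {r | w' ∈ annulus w b ∧ ‖piProj t r w - piProj t r w'‖ ≤ δ} with hW
  have hWmeas : ∀ w', MeasurableSet (W w') := by
    intro w'
    by_cases hann : w' ∈ annulus w b
    · have : W w' = {r | ‖piProj t r w - piProj t r w'‖ ≤ δ} := by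
        ext r; simp [hW, hann]
      rw [this]
      exact measurableSet_le
        (((piProj_cont t w).sub (piProj_cont t w')).norm.measurable) measurable_const
    · have : W w' = ∅ := by ext r; simp [hW, hann]
      rw [this]; exact MeasurableSet.empty
  -- main counting inequality in ℝ≥0∞
  have key : ENNReal.ofReal (A * F.card) * volume I ≤
      (K.card : ℝ≥0∞) * ENNReal.ofReal (100 * δ / b) := by
    calc ENNReal.ofReal (A * F.card) * volume I
        = ∫⁻ _ in I, ENNReal.ofReal (A * F.card) := by rw [setLIntegral_const]
      _ ≤ ∫⁻ r in I, ∑ w' ∈ F, (W w').indicator (fun _ => (1:ℝ≥0∞)) r := by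
          apply setLIntegral_mono
          · exact Finset.measurable_sum _ fun w' _ =>
              (measurable_const.indicator (hWmeas w'))
          · intro r hr
            have hsum : ∑ w' ∈ F, (W w').indicator (fun _ => (1:ℝ≥0∞)) r =
                ((F.filter (fun w' => w' ∈ annulus w b ∧
                  ‖piProj t r w - piProj t r w'‖ ≤ δ)).card : ℝ≥0∞) := by
              rw [Finset.card_filter]
              push_cast
              apply Finset.sum_congr rfl
              intro w' _
              by_cases hc : w' ∈ annulus w b ∧ ‖piProj t r w - piProj t r w'‖ ≤ δ
              · have hmem : r ∈ W w' := hc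
                rw [Set.indicator_of_mem hmem, if_pos hc]
              · have hmem : r ∉ W w' := hc
                rw [Set.indicator_of_notMem hmem, if_neg hc]
            rw [hsum]
            have hm := hmass r hr
            rw [mass_eq] at hm
            rw [← ENNReal.ofReal_natCast]
            apply ENNReal.ofReal_le_ofReal
            rw [le_div_iff₀ hN] at hm
            exact hm
      _ = ∑ w' ∈ F, volume (W w' ∩ I) := by
          rw [lintegral_finset_sum _ fun w' _ =>
            (measurable_const.indicator (hWmeas w'))]
          apply Finset.sum_congr rfl
          intro w' _
          rw [setLIntegral_indicator (hWmeas w'), setLIntegral_one]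
      _ ≤ ∑ w' ∈ F, (if w' ∈ S then ENNReal.ofReal (100 * δ / b) else 0) := by
          apply Finset.sum_le_sum
          intro w' _
          by_cases hSm : w' ∈ S
          · rw [if_pos hSm]
            have hann : w' ∈ annulus w b := hSm.1
            have hub : b ≤ ‖w - w'‖ := hann.1
            have hsub : (w - w' : E3) 0 = w 0 - w' 0 := rfl
            have hmax : b / 2 ≤ max |w 0 - w' 0| (max |w 1 - w' 1| |w 2 - w' 2|) := by
              have := max_ge_of_norm_ge (w - w') b hb hub
              simpa using this
            refine le_trans (measure_mono ?_)
              (badset_bound b δ (w 0 - w' 0) (w 1 - w' 1) (w 2 - w' 2) hb hδ hmax)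
            rintro r ⟨⟨_, hcl⟩, hrI⟩
            exact ⟨hIsub hrI, close_imp t r δ ht w w' hcl⟩
          · rw [if_neg hSm]
            have hWe : W w' ∩ I = ∅ := by
              rw [Set.eq_empty_iff_forall_notMem]
              rintro r ⟨⟨h1, h2⟩, hrI⟩
              exact hSm ⟨h1, r, hrI, h2⟩
            rw [hWe]
            simp
      _ = (K.card : ℝ≥0∞) * ENNReal.ofReal (100 * δ / b) := by
          rw [← Finset.sum_filter, Finset.sum_const, nsmul_eq_mul]
  -- convert to reals
  have hvfin : volume I ≠ ⊤ :=
    ne_top_of_le_ne_top (by rw [Real.volume_Icc]; exact ENNReal.ofReal_ne_top)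
      (measure_mono hIsub)
  have hreal : A * F.card * (volume I).toReal ≤ K.card * (100 * δ / b) := by
    have h1 : (ENNReal.ofReal (A * F.card) * volume I).toReal ≤
        ((K.card : ℝ≥0∞) * ENNReal.ofReal (100 * δ / b)).toReal := by
      apply ENNReal.toReal_mono _ key
      exact ENNReal.mul_ne_top (ENNReal.natCast_ne_top _) ENNReal.ofReal_ne_top
    rw [ENNReal.toReal_mul, ENNReal.toReal_mul, ENNReal.toReal_ofReal (by positivity),
      ENNReal.toReal_ofReal (by positivity)] at h1
    simpa using h1
  -- finish
  have hSmass : mass F S = (K.card : ℝ) / F.card := mass_eq F S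
  rw [hSmass, le_div_iff₀ hN]
  have hrw : 1/100 * ((volume I).toReal * b / δ) * A * F.card =
      ((volume I).toReal * b * A * F.card / 100) / δ := by ring
  rw [hrw, div_le_iff₀ hδ]
  have hkey2 : A * F.card * (volume I).toReal * b ≤ (K.card : ℝ) * 100 * δ := by
    have h := mul_le_mul_of_nonneg_right hreal hb.le
    calc A * ↑F.card * (volume I).toReal * b ≤ ((K.card : ℝ) * (100 * δ / b)) * b := h
      _ = (K.card : ℝ) * 100 * δ := by field_simp
  linarith
end
end
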